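/- Let L' be a symmetric PSD matrix with (1 + √ε/4)^{-1} L ⪯ L' ⪯ (1 + √ε/4) L for a symmetric PSD matrix L with the same range, let ε ∈ (0,1), and let S be a symmetric matrix with (1 - √ε/4) L'⁺ ⪯ S ⪯ L'⁺. Then (1+√ε)^{-1} L⁺ ⪯ S ⪯ (1+√ε) L⁺. -/

import Mathlib

/-!
Completing the square gives, for `A` positive semidefinite and every `y`,
`2 z ⬝ A A⁺ y - y ⬝ A y ≤ z ⬝ A⁺ z`, with equality at `y = A⁺ z`. When `A` and `B` have the same
range their projections `A A⁺` and `B B⁺` agree, so `A ⪯ B` forces `B⁺ ⪯ A⁺`. Applied to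
`(1 + √ε/4)⁻¹ L ⪯ L' ⪯ (1 + √ε/4) L` this gives `(1 + √ε/4)⁻¹ L⁺ ⪯ L'⁺ ⪯ (1 + √ε/4) L⁺`, and the
remaining factor `1 - √ε/4` is absorbed because `(1 + √ε)⁻¹ ≤ (1 - √ε/4) / (1 + √ε/4)` for `√ε ≤ 2`.
-/

open Matrix

/-- `Ap` is the Moore–Penrose pseudoinverse of `A` (the four Penrose conditions). -/
def IsMoorePenroseInv {n : ℕ} (A Ap : Matrix (Fin n) (Fin n) ℝ) : Prop :=
  A * Ap * A = A ∧ Ap * A * Ap = Ap ∧ (A * Ap)ᵀ = A * Ap ∧ (Ap * A)ᵀ = Ap * A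

/-- Loewner order on real symmetric matrices: domination of quadratic forms. -/
def LoewnerLE {n : ℕ} (M N : Matrix (Fin n) (Fin n) ℝ) : Prop :=
  ∀ z : Fin n → ℝ, z ⬝ᵥ M.mulVec z ≤ z ⬝ᵥ N.mulVec z

local infix:50 " ⪯ " => LoewnerLE

theorem Matrix.mulVec_dotProduct {n R : Type*} [Fintype n] [CommSemiring R] (M : Matrix n n R)
    (x y : n → R) : M *ᵥ x ⬝ᵥ y = x ⬝ᵥ Mᵀ *ᵥ y := by
  rw [dotProduct_transpose_mulVec, dotProduct_comm]

theorem Matrix.range_smul_mulVec {n K : Type*} [Fintype n] [Field K] (A : Matrix n n K) {c : K}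
    (hc : c ≠ 0) : Set.range (c • A).mulVec = Set.range A.mulVec := by
  ext x
  constructor
  · rintro ⟨v, rfl⟩
    exact ⟨c • v, by rw [mulVec_smul, smul_mulVec]⟩
  · rintro ⟨v, rfl⟩
    exact ⟨c⁻¹ • v, by rw [smul_mulVec, mulVec_smul, smul_smul, mul_inv_cancel₀ hc, one_smul]⟩

namespace IsMoorePenroseInv

variable {n : ℕ} {A Ap B Bp : Matrix (Fin n) (Fin n) ℝ}

theorem unique {X Y : Matrix (Fin n) (Fin n) ℝ}
    (hX : IsMoorePenroseInv A X) (hY : IsMoorePenroseInv A Y) : X = Y := by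
  obtain ⟨hX1, hX2, hX3, hX4⟩ := hX
  obtain ⟨hY1, hY2, hY3, hY4⟩ := hY
  have hAX : A * X = A * Y := calc
    A * X = (A * Y * A * X)ᵀ := by rw [hY1, hX3]
    _ = (A * X)ᵀ * (A * Y)ᵀ := by rw [Matrix.mul_assoc (A * Y), transpose_mul]
    _ = A * Y := by rw [hX3, hY3, ← Matrix.mul_assoc, hX1]
  have hXA : X * A = Y * A := calc
    X * A = (X * (A * Y * A))ᵀ := by rw [hY1, hX4]
    _ = (Y * A)ᵀ * (X * A)ᵀ := by
      rw [Matrix.mul_assoc A, ← Matrix.mul_assoc, transpose_mul]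
    _ = Y * A := by rw [hX4, hY4, Matrix.mul_assoc Y, ← Matrix.mul_assoc A X, hX1]
  calc X = X * A * X := hX2.symm
    _ = Y * A * Y := by rw [Matrix.mul_assoc, hAX, ← Matrix.mul_assoc, hXA]
    _ = Y := hY2

theorem transpose (h : IsMoorePenroseInv A Ap) : IsMoorePenroseInv Aᵀ Apᵀ := by
  obtain ⟨h1, h2, h3, h4⟩ := h
  refine ⟨?_, ?_, ?_, ?_⟩
  · rw [← transpose_mul, ← transpose_mul, ← Matrix.mul_assoc, h1]
  · rw [← transpose_mul, ← transpose_mul, ← Matrix.mul_assoc, h2]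
  · rw [← transpose_mul, transpose_transpose, h4]
  · rw [← transpose_mul, transpose_transpose, h3]

theorem transpose_eq_self (h : IsMoorePenroseInv A Ap) (hA : Aᵀ = A) : Apᵀ = Ap :=
  unique (hA ▸ h.transpose) h

theorem mul_comm_of_transpose_eq_self (h : IsMoorePenroseInv A Ap) (hA : Aᵀ = A) :
    A * Ap = Ap * A := by
  rw [← h.2.2.1, transpose_mul, hA, h.transpose_eq_self hA]

theorem smul (h : IsMoorePenroseInv A Ap) {c : ℝ} (hc : c ≠ 0) :
    IsMoorePenroseInv (c • A) (c⁻¹ • Ap) := by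
  obtain ⟨h1, h2, h3, h4⟩ := h
  simp only [IsMoorePenroseInv, Matrix.smul_mul, Matrix.mul_smul, smul_smul,
    mul_inv_cancel₀ hc, inv_mul_cancel₀ hc, one_smul, h1, h2, h3, h4, and_self]

theorem mul_mul_of_range_subset (h : IsMoorePenroseInv A Ap)
    (hB : Set.range B.mulVec ⊆ Set.range A.mulVec) : A * Ap * B = B := by
  refine mulVec_injective (funext fun v => ?_)
  obtain ⟨w, hw⟩ := hB ⟨v, rfl⟩
  rw [← mulVec_mulVec, ← hw, mulVec_mulVec, h.1]

theorem mul_eq_mul_of_range_eq (hA : IsMoorePenroseInv A Ap) (hB : IsMoorePenroseInv B Bp)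
    (hr : Set.range A.mulVec = Set.range B.mulVec) : A * Ap = B * Bp := by
  have hAB : A * Ap * (B * Bp) = B * Bp := by
    rw [← Matrix.mul_assoc, hA.mul_mul_of_range_subset hr.ge]
  have hBA : B * Bp * (A * Ap) = A * Ap := by
    rw [← Matrix.mul_assoc, hB.mul_mul_of_range_subset hr.le]
  rw [← hBA, ← hA.2.2.1, ← hB.2.2.1, ← transpose_mul, hAB]

theorem dotProduct_sub_mulVec_sub (h : IsMoorePenroseInv A Ap) (hA : Aᵀ = A) (y z : Fin n → ℝ) :
    (y - Ap *ᵥ z) ⬝ᵥ A *ᵥ (y - Ap *ᵥ z)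
      = y ⬝ᵥ A *ᵥ y - 2 * (z ⬝ᵥ (A * Ap) *ᵥ y) + z ⬝ᵥ Ap *ᵥ z := by
  have hAp : Apᵀ = Ap := h.transpose_eq_self hA
  have hcomm : A * Ap = Ap * A := h.mul_comm_of_transpose_eq_self hA
  have hcross₁ : y ⬝ᵥ A *ᵥ (Ap *ᵥ z) = z ⬝ᵥ (A * Ap) *ᵥ y := by
    rw [mulVec_mulVec, ← dotProduct_transpose_mulVec, h.2.2.1]
  have hcross₂ : Ap *ᵥ z ⬝ᵥ A *ᵥ y = z ⬝ᵥ (A * Ap) *ᵥ y := by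
    rw [mulVec_dotProduct, mulVec_mulVec, hAp, hcomm]
  have hsq : Ap *ᵥ z ⬝ᵥ A *ᵥ (Ap *ᵥ z) = z ⬝ᵥ Ap *ᵥ z := by
    rw [mulVec_dotProduct, mulVec_mulVec, mulVec_mulVec, hAp, h.2.1]
  rw [mulVec_sub, sub_dotProduct, dotProduct_sub, dotProduct_sub, hcross₁, hcross₂, hsq]
  ring

theorem dotProduct_mulVec_nonneg (h : IsMoorePenroseInv A Ap) (hA : A.PosSemidef)
    (z : Fin n → ℝ) : 0 ≤ z ⬝ᵥ Ap *ᵥ z := by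
  have hsq := h.dotProduct_sub_mulVec_sub (isHermitian_iff_isSymm.mp hA.isHermitian) 0 z
  have hnonneg := hA.dotProduct_mulVec_nonneg (0 - Ap *ᵥ z)
  simp only [star_trivial] at hnonneg
  simp only [mulVec_zero, dotProduct_zero] at hsq
  linarith

end IsMoorePenroseInv

namespace LoewnerLE

variable {n : ℕ}

theorem trans {M N P : Matrix (Fin n) (Fin n) ℝ} (hMN : M ⪯ N) (hNP : N ⪯ P) : M ⪯ P :=
  fun z => (hMN z).trans (hNP z)

instance : Trans (@LoewnerLE n) (@LoewnerLE n) (@LoewnerLE n) := ⟨trans⟩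

theorem smul {M N : Matrix (Fin n) (Fin n) ℝ} (h : M ⪯ N) {c : ℝ} (hc : 0 ≤ c) :
    c • M ⪯ c • N := fun z => by
  simpa only [smul_mulVec, dotProduct_smul, smul_eq_mul] using mul_le_mul_of_nonneg_left (h z) hc

theorem smul_of_le {M : Matrix (Fin n) (Fin n) ℝ} (hM : ∀ z, 0 ≤ z ⬝ᵥ M *ᵥ z) {c d : ℝ}
    (hcd : c ≤ d) : c • M ⪯ d • M := fun z => by
  simpa only [smul_mulVec, dotProduct_smul, smul_eq_mul] using mul_le_mul_of_nonneg_right hcd (hM z)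

/-- Take `y = B⁺ z` in both instances of `IsMoorePenroseInv.dotProduct_sub_mulVec_sub`: for `B`
the left side vanishes, for `A` it is nonnegative, and `A A⁺ = B B⁺`. -/
theorem moorePenroseInv_anti {A B Ap Bp : Matrix (Fin n) (Fin n) ℝ} (hA : A.PosSemidef)
    (hB : Bᵀ = B) (hAp : IsMoorePenroseInv A Ap) (hBp : IsMoorePenroseInv B Bp)
    (hr : Set.range A.mulVec = Set.range B.mulVec) (hAB : A ⪯ B) : Bp ⪯ Ap := fun z => by
  set y := Bp *ᵥ z
  have hB_sq := hBp.dotProduct_sub_mulVec_sub hB y z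
  have hA_sq := hAp.dotProduct_sub_mulVec_sub (isHermitian_iff_isSymm.mp hA.isHermitian) y z
  rw [sub_self, zero_dotProduct, ← hAp.mul_eq_mul_of_range_eq hBp hr] at hB_sq
  have hnonneg := hA.dotProduct_mulVec_nonneg (y - Ap *ᵥ z)
  simp only [star_trivial] at hnonneg
  linarith [hAB y]

end LoewnerLE

theorem stmt_19_general {n : ℕ} (L L' Lp L'p S : Matrix (Fin n) (Fin n) ℝ)
    (hL : L.PosSemidef) (hL' : L'.PosSemidef)
    (hLp : IsMoorePenroseInv L Lp) (hL'p : IsMoorePenroseInv L' L'p)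
    (hrange : Set.range L.mulVec = Set.range L'.mulVec)
    (ε : ℝ) (hε1 : ε < 1)
    (hlow : LoewnerLE ((1 + Real.sqrt ε / 4)⁻¹ • L) L')
    (hhigh : LoewnerLE L' ((1 + Real.sqrt ε / 4) • L))
    (hSlow : LoewnerLE ((1 - Real.sqrt ε / 4) • L'p) S)
    (hShigh : LoewnerLE S L'p) :
    LoewnerLE ((1 + Real.sqrt ε)⁻¹ • Lp) S ∧ LoewnerLE S ((1 + Real.sqrt ε) • Lp) := by
  have hs1 : Real.sqrt ε < 1 := (Real.sqrt_lt' one_pos).2 (by linarith)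
  have hs0 : 0 ≤ Real.sqrt ε := Real.sqrt_nonneg ε
  generalize Real.sqrt ε = s at *
  have hc : 0 < 1 + s / 4 := by linarith
  have hL'p_le : L'p ⪯ (1 + s / 4) • Lp := by
    simpa only [inv_inv] using LoewnerLE.moorePenroseInv_anti (hL.smul (inv_nonneg.2 hc.le))
      (isHermitian_iff_isSymm.mp hL'.isHermitian) (hLp.smul (inv_ne_zero hc.ne')) hL'p
      (by rw [L.range_smul_mulVec (inv_ne_zero hc.ne'), hrange]) hlow
  have hLp_le : (1 + s / 4)⁻¹ • Lp ⪯ L'p :=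
    LoewnerLE.moorePenroseInv_anti hL'
      (by rw [transpose_smul, isHermitian_iff_isSymm.mp hL.isHermitian]) hL'p (hLp.smul hc.ne')
      (by rw [L.range_smul_mulVec hc.ne', hrange]) hhigh
  have hscale : (1 + s)⁻¹ ≤ (1 - s / 4) * (1 + s / 4)⁻¹ := by
    rw [← div_eq_mul_inv, inv_eq_one_div, div_le_div_iff₀ (by linarith) hc]
    nlinarith
  have hLp0 := hLp.dotProduct_mulVec_nonneg hL
  constructor
  · calc (1 + s)⁻¹ • Lp
        _ ⪯ (1 - s / 4) • (1 + s / 4)⁻¹ • Lp := by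
          rw [smul_smul]; exact LoewnerLE.smul_of_le hLp0 hscale
        _ ⪯ (1 - s / 4) • L'p := hLp_le.smul (by linarith)
        _ ⪯ S := hSlow
  · calc S
        _ ⪯ L'p := hShigh
        _ ⪯ (1 + s / 4) • Lp := hL'p_le
        _ ⪯ (1 + s) • Lp := LoewnerLE.smul_of_le hLp0 (by linarith)

theorem stmt_19 {n : ℕ} (L L' Lp L'p S : Matrix (Fin n) (Fin n) ℝ)
    (hL : L.PosSemidef) (hL' : L'.PosSemidef)
    (hLp : IsMoorePenroseInv L Lp) (hL'p : IsMoorePenroseInv L' L'p)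
    (hrange : Set.range L.mulVec = Set.range L'.mulVec)
    (ε : ℝ) (hε0 : 0 < ε) (hε1 : ε < 1)
    (hlow : LoewnerLE ((1 + Real.sqrt ε / 4)⁻¹ • L) L')
    (hhigh : LoewnerLE L' ((1 + Real.sqrt ε / 4) • L))
    (hS : Sᵀ = S)
    (hSlow : LoewnerLE ((1 - Real.sqrt ε / 4) • L'p) S)
    (hShigh : LoewnerLE S L'p) :
    LoewnerLE ((1 + Real.sqrt ε)⁻¹ • Lp) S ∧ LoewnerLE S ((1 + Real.sqrt ε) • Lp) :=
  stmt_19_general L L' Lp L'p S hL hL' hLp hL'p hrange ε hε1 hlow hhigh hSlow hShigh
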